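/- Fix ρ₀ > 0 and set r₀ := ((2−√3)/2)^{1/2}·ρ₀. The function w(r) := (r² + (√3/2)ρ₀²)/(ρ₀⁴ − (r² + (√3/2)ρ₀²)²)^{1/2}, defined for 0 < r < r₀, is differentiable and satisfies w'(r) = (2w(r)³ + 2w(r) − √3(1 + w(r)²)^{3/2})/r on (0, r₀); moreover w(r) > √3 for all r ∈ (0, r₀), w(r) → √3 as r → 0⁺, w(r) → +∞ as r → r₀⁻, and for each fixed r > 0 one has w(r) → √3 as ρ₀ → ∞ (where w is defined once r₀ > r). -/

import Mathlib

/-!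
Dividing numerator and denominator by `ρ₀²` gives `w(r) = F(u(r))` with `F(u) = u / √(1 - u²)`
(that is, `tan ∘ arcsin`) and `u(r) = r²/ρ₀² + √3/2`. Since `√(1 + F²) = (1 - u²)^{-1/2}`, the
right-hand side of the ODE becomes `(2u - √3)(1 - u²)^{-3/2} / r = (2r/ρ₀²)(1 - u²)^{-3/2}`, which is
`F'(u) u'(r)`. The parameter `u` runs through `(√3/2, 1)` on `(0, r₀)`, with `F(√3/2) = √3`
and `F → ∞` at `1`; and `u → √3/2` both as `r → 0` and as `ρ₀ → ∞`.
-/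

open Filter

/-- The type-I solution `w(r) = (r² + (√3/2)ρ₀²)/√(ρ₀⁴ − (r² + (√3/2)ρ₀²)²)`. -/
noncomputable def wTypeI (ρ₀ r : ℝ) : ℝ :=
  (r ^ 2 + (Real.sqrt 3 / 2) * ρ₀ ^ 2) /
    Real.sqrt (ρ₀ ^ 4 - (r ^ 2 + (Real.sqrt 3 / 2) * ρ₀ ^ 2) ^ 2)

open Set Topology

noncomputable def tanArcsin (u : ℝ) : ℝ := u / √(1 - u ^ 2)

section tanArcsin

variable {u : ℝ}

lemma sqrt_one_add_tanArcsin_sq (hu : u ^ 2 < 1) :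
    √(1 + tanArcsin u ^ 2) = (√(1 - u ^ 2))⁻¹ := by
  have hs : 0 < √(1 - u ^ 2) := Real.sqrt_pos.mpr (by linarith)
  have hs2 : √(1 - u ^ 2) ^ 2 = 1 - u ^ 2 := Real.sq_sqrt (by linarith)
  rw [← Real.sqrt_sq (inv_pos.mpr hs).le]
  congr 1
  rw [tanArcsin]
  field_simp
  linear_combination hs2

lemma hasDerivAt_tanArcsin (hu : u ^ 2 < 1) :
    HasDerivAt tanArcsin ((√(1 - u ^ 2))⁻¹ ^ 3) u := by
  have hs : 0 < √(1 - u ^ 2) := Real.sqrt_pos.mpr (by linarith)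
  have hs2 : √(1 - u ^ 2) ^ 2 = 1 - u ^ 2 := Real.sq_sqrt (by linarith)
  have hsqrt := ((hasDerivAt_pow 2 u).const_sub 1).sqrt (by linarith)
  refine ((hasDerivAt_id' u).div hsqrt hs.ne').congr_deriv ?_
  field_simp
  norm_num
  linear_combination 2 * hs2

lemma tanArcsin_ode (c : ℝ) (hu : u ^ 2 < 1) :
    2 * tanArcsin u ^ 3 + 2 * tanArcsin u - c * √(1 + tanArcsin u ^ 2) ^ 3
      = (2 * u - c) * (√(1 - u ^ 2))⁻¹ ^ 3 := by
  have hs : 0 < √(1 - u ^ 2) := Real.sqrt_pos.mpr (by linarith)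
  have hs2 : √(1 - u ^ 2) ^ 2 = 1 - u ^ 2 := Real.sq_sqrt (by linarith)
  rw [sqrt_one_add_tanArcsin_sq hu, tanArcsin]
  field_simp
  linear_combination 2 * u * hs2

lemma tendsto_tanArcsin_sqrt_three_div_two : Tendsto tanArcsin (𝓝 (√3 / 2)) (𝓝 √3) := by
  have h : 1 - (√3 / 2) ^ 2 = (1 / 2) ^ 2 := by
    rw [div_pow, Real.sq_sqrt (by norm_num)]; norm_num
  have hval : tanArcsin (√3 / 2) = √3 := by
    rw [tanArcsin, h, Real.sqrt_sq (by norm_num)]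
    ring
  have hcont := (hasDerivAt_tanArcsin (by rw [← sub_pos, h]; norm_num)).continuousAt.tendsto
  rwa [hval] at hcont

lemma sqrt_three_lt_tanArcsin (hlow : √3 / 2 < u) (hhigh : u < 1) : √3 < tanArcsin u := by
  have hu : 0 < u := by linarith [Real.sqrt_nonneg 3]
  have hs : 0 < √(1 - u ^ 2) := Real.sqrt_pos.mpr (by nlinarith)
  rw [tanArcsin, lt_div_iff₀ hs, ← Real.sqrt_mul (by norm_num), Real.sqrt_lt' hu]
  nlinarith [Real.sq_sqrt (show (0 : ℝ) ≤ 3 by norm_num), Real.sqrt_nonneg 3]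

lemma tendsto_tanArcsin_nhdsLT_one : Tendsto tanArcsin (𝓝[<] 1) atTop := by
  have hid : Tendsto (fun u : ℝ => u) (𝓝[<] 1) (𝓝 1) :=
    tendsto_nhdsWithin_of_tendsto_nhds tendsto_id
  have hden : Tendsto (fun u : ℝ => √(1 - u ^ 2)) (𝓝[<] 1) (𝓝[>] 0) := by
    refine tendsto_nhdsWithin_iff.mpr ⟨?_, ?_⟩
    · have : Continuous (fun u : ℝ => √(1 - u ^ 2)) := by fun_prop
      simpa using tendsto_nhdsWithin_of_tendsto_nhds (this.tendsto 1)
    · filter_upwards [Ioo_mem_nhdsLT (show (0 : ℝ) < 1 by norm_num)] with u hu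
      exact Real.sqrt_pos.mpr (by nlinarith [hu.1, hu.2])
  exact (hid.pos_mul_atTop one_pos hden.inv_tendsto_nhdsGT_zero).congr fun u => by
    simp only [Pi.inv_apply, tanArcsin, div_eq_mul_inv]

end tanArcsin

lemma sqrt_three_lt_two : √3 < 2 := by
  rw [Real.sqrt_lt' two_pos]; norm_num

section wTypeI

variable {ρ r : ℝ}

lemma wTypeI_eq_tanArcsin (hρ : ρ ≠ 0) (r : ℝ) :
    wTypeI ρ r = tanArcsin (r ^ 2 / ρ ^ 2 + √3 / 2) := by
  have hρ2 : 0 < ρ ^ 2 := by positivity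
  have hnum : r ^ 2 + √3 / 2 * ρ ^ 2 = ρ ^ 2 * (r ^ 2 / ρ ^ 2 + √3 / 2) := by field_simp
  have hden : ρ ^ 4 - (r ^ 2 + √3 / 2 * ρ ^ 2) ^ 2
      = (ρ ^ 2) ^ 2 * (1 - (r ^ 2 / ρ ^ 2 + √3 / 2) ^ 2) := by
    rw [hnum]; ring
  rw [wTypeI, hden, Real.sqrt_mul (sq_nonneg _), Real.sqrt_sq hρ2.le, hnum,
    mul_div_mul_left _ _ hρ2.ne', tanArcsin]

lemma sq_div_sq_add_sqrt_three_div_two_eq_one (hρ : ρ ≠ 0) :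
    (√((2 - √3) / 2) * ρ) ^ 2 / ρ ^ 2 + √3 / 2 = 1 := by
  rw [mul_pow, Real.sq_sqrt (by linarith [sqrt_three_lt_two]),
    mul_div_cancel_right₀ _ (pow_ne_zero 2 hρ)]
  ring

lemma sq_div_sq_add_sqrt_three_div_two_mem_Ioo (hρ : 0 < ρ)
    (hr : r ∈ Ioo 0 (√((2 - √3) / 2) * ρ)) :
    r ^ 2 / ρ ^ 2 + √3 / 2 ∈ Ioo (√3 / 2) 1 := by
  have hρ2 : 0 < ρ ^ 2 := by positivity
  constructor
  · have : 0 < r ^ 2 / ρ ^ 2 := div_pos (pow_pos hr.1 2) hρ2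
    linarith
  · rw [← sq_div_sq_add_sqrt_three_div_two_eq_one hρ.ne']
    gcongr
    exacts [hr.1.le, hr.2]

lemma hasDerivAt_wTypeI (hρ : 0 < ρ) (hr : r ∈ Ioo 0 (√((2 - √3) / 2) * ρ)) :
    HasDerivAt (wTypeI ρ)
      ((2 * wTypeI ρ r ^ 3 + 2 * wTypeI ρ r - √3 * √(1 + wTypeI ρ r ^ 2) ^ 3) / r) r := by
  obtain ⟨hlow, hhigh⟩ := sq_div_sq_add_sqrt_three_div_two_mem_Ioo hρ hr
  have hu : (r ^ 2 / ρ ^ 2 + √3 / 2) ^ 2 < 1 := by nlinarith [Real.sqrt_nonneg 3]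
  have hparam : HasDerivAt (fun x => x ^ 2 / ρ ^ 2 + √3 / 2) (2 * r / ρ ^ 2) r := by
    simpa using ((hasDerivAt_pow 2 r).div_const (ρ ^ 2)).add_const (√3 / 2)
  have hw : wTypeI ρ = tanArcsin ∘ fun x => x ^ 2 / ρ ^ 2 + √3 / 2 :=
    funext (wTypeI_eq_tanArcsin hρ.ne')
  rw [hw, Function.comp_apply, tanArcsin_ode _ hu]
  refine ((hasDerivAt_tanArcsin hu).comp r hparam).congr_deriv ?_
  field_simp [hr.1.ne']
  ring

lemma sqrt_three_lt_wTypeI (hρ : 0 < ρ) (hr : r ∈ Ioo 0 (√((2 - √3) / 2) * ρ)) :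
    √3 < wTypeI ρ r := by
  obtain ⟨hlow, hhigh⟩ := sq_div_sq_add_sqrt_three_div_two_mem_Ioo hρ hr
  rw [wTypeI_eq_tanArcsin hρ.ne']
  exact sqrt_three_lt_tanArcsin hlow hhigh

lemma tendsto_wTypeI_nhdsGT_zero (hρ : ρ ≠ 0) : Tendsto (wTypeI ρ) (𝓝[>] 0) (𝓝 √3) := by
  have hparam : Tendsto (fun x : ℝ => x ^ 2 / ρ ^ 2 + √3 / 2) (𝓝 0) (𝓝 (√3 / 2)) := by
    have : Continuous (fun x : ℝ => x ^ 2 / ρ ^ 2 + √3 / 2) := by fun_prop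
    simpa using this.tendsto 0
  rw [funext (wTypeI_eq_tanArcsin hρ)]
  exact (tendsto_tanArcsin_sqrt_three_div_two.comp hparam).mono_left nhdsWithin_le_nhds

lemma tendsto_wTypeI_nhdsLT (hρ : 0 < ρ) :
    Tendsto (wTypeI ρ) (𝓝[<] (√((2 - √3) / 2) * ρ)) atTop := by
  have hr₀ : 0 < √((2 - √3) / 2) * ρ :=
    mul_pos (Real.sqrt_pos.mpr (by linarith [sqrt_three_lt_two])) hρ
  have hparam : Tendsto (fun x : ℝ => x ^ 2 / ρ ^ 2 + √3 / 2)
      (𝓝[<] (√((2 - √3) / 2) * ρ)) (𝓝[<] 1) := by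
    refine tendsto_nhdsWithin_iff.mpr ⟨?_, ?_⟩
    · have h := ((continuous_pow 2).div_const (ρ ^ 2)).add_const (√3 / 2)
        |>.tendsto (√((2 - √3) / 2) * ρ)
      rw [sq_div_sq_add_sqrt_three_div_two_eq_one hρ.ne'] at h
      exact tendsto_nhdsWithin_of_tendsto_nhds h
    · filter_upwards [Ioo_mem_nhdsLT hr₀] with r hr
      exact (sq_div_sq_add_sqrt_three_div_two_mem_Ioo hρ hr).2
  rw [funext (wTypeI_eq_tanArcsin hρ.ne')]
  exact tendsto_tanArcsin_nhdsLT_one.comp hparam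

lemma tendsto_wTypeI_atTop (r : ℝ) : Tendsto (fun ρ => wTypeI ρ r) atTop (𝓝 √3) := by
  have hparam : Tendsto (fun ρ : ℝ => r ^ 2 / ρ ^ 2 + √3 / 2) atTop (𝓝 (√3 / 2)) := by
    simpa [div_eq_mul_inv] using
      ((tendsto_pow_atTop two_ne_zero).inv_tendsto_atTop.const_mul (r ^ 2)).add_const (√3 / 2)
  refine (tendsto_tanArcsin_sqrt_three_div_two.comp hparam).congr' ?_
  filter_upwards [eventually_ne_atTop 0] with ρ hρ
  exact (wTypeI_eq_tanArcsin hρ r).symm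

end wTypeI

theorem stmt_5 (ρ₀ : ℝ) (hρ₀ : 0 < ρ₀) (r₀ : ℝ)
    (hr₀ : r₀ = Real.sqrt ((2 - Real.sqrt 3) / 2) * ρ₀) :
    (∀ r ∈ Set.Ioo (0 : ℝ) r₀,
      HasDerivAt (wTypeI ρ₀)
        ((2 * (wTypeI ρ₀ r) ^ 3 + 2 * wTypeI ρ₀ r
          - Real.sqrt 3 * (Real.sqrt (1 + (wTypeI ρ₀ r) ^ 2)) ^ 3) / r) r)
    ∧ (∀ r ∈ Set.Ioo (0 : ℝ) r₀, Real.sqrt 3 < wTypeI ρ₀ r)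
    ∧ Tendsto (wTypeI ρ₀) (nhdsWithin 0 (Set.Ioi 0)) (nhds (Real.sqrt 3))
    ∧ Tendsto (wTypeI ρ₀) (nhdsWithin r₀ (Set.Iio r₀)) atTop
    ∧ (∀ r : ℝ, 0 < r → Tendsto (fun ρ => wTypeI ρ r) atTop (nhds (Real.sqrt 3))) := by
  subst hr₀
  exact ⟨fun r hr => hasDerivAt_wTypeI hρ₀ hr, fun r hr => sqrt_three_lt_wTypeI hρ₀ hr,
    tendsto_wTypeI_nhdsGT_zero hρ₀.ne', tendsto_wTypeI_nhdsLT hρ₀,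
    fun r _ => tendsto_wTypeI_atTop r⟩
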